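/- arXiv:1402.5584 — 2 statements merged into one kernel-verified Lean document; each statement's English description precedes it below -/
import Mathlib

section
/- Residual decrement at a superset of the true support is a rank-one projection of the noise. Let y = Xβ* + w with supp(β*) ⊆ S ⊆ {1,…,p}, and let j ∉ S be such that X_{S∪{j}} has full column rank. Then ‖Π⊥[S] y‖₂² − ‖Π⊥[S∪{j}] y‖₂² = ‖P_j w‖₂², where P_j is the orthogonal projection of ℝⁿ onto the one-dimensional span of Π⊥[S] X_j. In particular, if X_{S*∪{j}} has full column rank for every j ∉ S*, then Δ(S*) = max_{j∉S*} ‖P_j w‖₂² with P_j the rank-one orthogonal projection onto span(Π⊥[S*] X_j). -/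
open scoped RealInnerProductSpace

/-- `Π⊥[S] v`: the orthogonal projection of `v` onto the orthogonal complement of the
column span of the columns of `X` indexed by `S` (so `Π⊥[∅] = id`). -/
noncomputable def projPerp {n p : ℕ} (X : Fin p → EuclideanSpace ℝ (Fin n))
    (S : Finset (Fin p)) (v : EuclideanSpace ℝ (Fin n)) : EuclideanSpace ℝ (Fin n) :=
  v - (Submodule.orthogonalProjectionOnto (Submodule.span ℝ (X '' ↑S)) v : EuclideanSpace ℝ (Fin n))

/-- `Δ(S) = max_{j ∉ S} (‖Π⊥[S] y‖² − ‖Π⊥[S∪{j}] y‖²)`. -/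
noncomputable def pathDelta {n p : ℕ} (X : Fin p → EuclideanSpace ℝ (Fin n))
    (S : Finset (Fin p)) (y : EuclideanSpace ℝ (Fin n)) : ℝ :=
  ⨆ j : {j : Fin p // j ∉ S}, (‖projPerp X S y‖ ^ 2 - ‖projPerp X (insert j.1 S) y‖ ^ 2)

/-!
Since `supp β* ⊆ S`, the signal `Xβ*` lies in `span X_S ⊆ span X_{S∪{j}}`, so both residuals
of `y` are residuals of `w`. Adding the column `X_j` to `S` enlarges the column span by the line
through `Π⊥[S] X_j`, which is orthogonal to `span X_S` (one Gram–Schmidt step). Hence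
`Π⊥[S] w = Π⊥[S∪{j}] w + P_j w` is an orthogonal decomposition, and Pythagoras gives the
decrement `‖P_j w‖²`.
-/

open scoped InnerProductSpace

namespace Submodule

variable {𝕜 E : Type*} [RCLike 𝕜] [NormedAddCommGroup E] [InnerProductSpace 𝕜 E]

theorem IsOrtho.starProjection_sup_apply {K L : Submodule 𝕜 E} (hKL : K ⟂ L)
    [K.HasOrthogonalProjection] [L.HasOrthogonalProjection] [(K ⊔ L).HasOrthogonalProjection]
    (u : E) : (K ⊔ L).starProjection u = K.starProjection u + L.starProjection u := by
  refine eq_starProjection_of_mem_of_inner_eq_zero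
    (add_mem (mem_sup_left (K.starProjection_apply_mem u))
      (mem_sup_right (L.starProjection_apply_mem u))) fun v hv => ?_
  obtain ⟨k, hk, l, hl, rfl⟩ := mem_sup.mp hv
  have hk' : ⟪u - (K.starProjection u + L.starProjection u), k⟫_𝕜 = 0 := by
    rw [sub_add_eq_sub_sub, inner_sub_left, K.starProjection_inner_eq_zero u k hk,
      hKL.symm.inner_eq (L.starProjection_apply_mem u) hk, sub_zero]
  have hl' : ⟪u - (K.starProjection u + L.starProjection u), l⟫_𝕜 = 0 := by
    rw [add_comm, sub_add_eq_sub_sub, inner_sub_left, L.starProjection_inner_eq_zero u l hl,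
      hKL.inner_eq (K.starProjection_apply_mem u) hl, sub_zero]
  rw [inner_add_right, hk', hl', add_zero]

theorem IsOrtho.norm_sub_starProjection_sq {K L : Submodule 𝕜 E} (hKL : K ⟂ L)
    [K.HasOrthogonalProjection] [L.HasOrthogonalProjection] [(K ⊔ L).HasOrthogonalProjection]
    (u : E) :
    ‖u - K.starProjection u‖ ^ 2
      = ‖u - (K ⊔ L).starProjection u‖ ^ 2 + ‖L.starProjection u‖ ^ 2 := by
  have hsplit : u - K.starProjection u = (u - (K ⊔ L).starProjection u) + L.starProjection u := by
    rw [hKL.starProjection_sup_apply]; abel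
  have horth : ⟪u - (K ⊔ L).starProjection u, L.starProjection u⟫_𝕜 = 0 :=
    (isOrtho_orthogonal_left _).mono_left (orthogonal_le le_sup_right) |>.inner_eq
      ((K ⊔ L).sub_starProjection_mem_orthogonal u) (L.starProjection_apply_mem u)
  rw [hsplit, norm_add_sq (𝕜 := 𝕜), horth, map_zero, mul_zero, add_zero]

theorem isOrtho_span_singleton_sub_starProjection (K : Submodule 𝕜 E) [K.HasOrthogonalProjection]
    (x : E) : K ⟂ 𝕜 ∙ (x - K.starProjection x) :=
  (isOrtho_orthogonal_right K).mono_right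
    ((span_singleton_le_iff_mem _ _).mpr (K.sub_starProjection_mem_orthogonal x))

theorem sup_span_singleton_sub_starProjection (K : Submodule 𝕜 E) [K.HasOrthogonalProjection]
    (x : E) : K ⊔ (𝕜 ∙ (x - K.starProjection x)) = K ⊔ (𝕜 ∙ x) := by
  have hPx : K.starProjection x ∈ K := K.starProjection_apply_mem x
  apply le_antisymm <;> refine sup_le le_sup_left ((span_singleton_le_iff_mem _ _).mpr ?_)
  · exact sub_mem (mem_sup_right (mem_span_singleton_self x)) (mem_sup_left hPx)
  · simpa using add_mem (mem_sup_right (mem_span_singleton_self (x - K.starProjection x)))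
      (mem_sup_left hPx)

theorem sub_starProjection_add_left_of_mem (K : Submodule 𝕜 E) [K.HasOrthogonalProjection]
    {m : E} (hm : m ∈ K) (u : E) :
    m + u - K.starProjection (m + u) = u - K.starProjection u := by
  rw [map_add, starProjection_eq_self_iff.mpr hm]; abel

theorem sum_smul_mem_span_image {R M ι : Type*} [Semiring R] [AddCommMonoid M] [Module R M]
    [Fintype ι] (v : ι → M) (β : ι → R) {s : Set ι} (hβ : ∀ i, β i ≠ 0 → i ∈ s) :
    ∑ i, β i • v i ∈ span R (v '' s) :=
  sum_mem fun i _ => by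
    by_cases hi : β i = 0
    · simp [hi]
    · exact smul_mem _ _ (subset_span ⟨i, hβ i hi, rfl⟩)

end Submodule

section projPerp

open Submodule

variable {n p : ℕ} (X : Fin p → EuclideanSpace ℝ (Fin n))

theorem projPerp_eq_sub_starProjection (S : Finset (Fin p)) (v : EuclideanSpace ℝ (Fin n)) :
    projPerp X S v = v - (span ℝ (X '' ↑S)).starProjection v :=
  rfl

theorem projPerp_add_of_mem_span {S : Finset (Fin p)} {m : EuclideanSpace ℝ (Fin n)}
    (hm : m ∈ span ℝ (X '' ↑S)) (v : EuclideanSpace ℝ (Fin n)) :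
    projPerp X S (m + v) = projPerp X S v :=
  sub_starProjection_add_left_of_mem _ hm v

theorem sq_norm_projPerp_sub_sq_norm_projPerp_insert (S : Finset (Fin p)) (j : Fin p)
    (v : EuclideanSpace ℝ (Fin n)) :
    ‖projPerp X S v‖ ^ 2 - ‖projPerp X (insert j S) v‖ ^ 2
      = ‖((ℝ ∙ projPerp X S (X j)).orthogonalProjectionOnto v : EuclideanSpace ℝ (Fin n))‖ ^ 2 := by
  set K := span ℝ (X '' ↑S)
  have hspan : span ℝ (X '' ↑(insert j S)) = K ⊔ (ℝ ∙ projPerp X S (X j)) := by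
    rw [Finset.coe_insert, Set.image_insert_eq, span_insert, sup_comm,
      projPerp_eq_sub_starProjection, sup_span_singleton_sub_starProjection]
  have h := (isOrtho_span_singleton_sub_starProjection K (X j)).norm_sub_starProjection_sq v
  rw [← projPerp_eq_sub_starProjection X S (X j)] at h
  rw [projPerp_eq_sub_starProjection X S v, projPerp_eq_sub_starProjection X (insert j S), hspan,
    h, ← starProjection_apply]
  ring

end projPerp

/-- **Residual decrement at a superset of the true support is a rank-one projection of the
noise.**  If `y = Xβ* + w`, `supp β* ⊆ S` and `j ∉ S` with `X_{S∪{j}}` of full column rank,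
then `‖Π⊥[S] y‖² − ‖Π⊥[S∪{j}] y‖² = ‖P_j w‖²`, where `P_j` is the orthogonal projection
onto the one-dimensional span of `Π⊥[S] X_j`.  In particular, if `X_{S*∪{j}}` has full
column rank for every `j ∉ S*`, then `Δ(S*) = max_{j ∉ S*} ‖P_j w‖²`. -/
theorem residual_decrement_eq_rank_one_projection {n p : ℕ}
    (X : Fin p → EuclideanSpace ℝ (Fin n)) (β : Fin p → ℝ)
    (w y : EuclideanSpace ℝ (Fin n))
    (hy : y = (∑ j, β j • X j) + w)
    (Sstar : Finset (Fin p)) (hSstar : ∀ j, j ∈ Sstar ↔ β j ≠ 0) :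
    (∀ (S : Finset (Fin p)) (j : Fin p), Sstar ⊆ S → j ∉ S →
        LinearIndependent ℝ (fun i : ((insert j S : Finset (Fin p)) : Set (Fin p)) => X i) →
        ‖projPerp X S y‖ ^ 2 - ‖projPerp X (insert j S) y‖ ^ 2
          = ‖(Submodule.orthogonalProjectionOnto (ℝ ∙ projPerp X S (X j)) w : EuclideanSpace ℝ (Fin n))‖ ^ 2)
    ∧ ((∀ j ∉ Sstar,
          LinearIndependent ℝ
            (fun i : ((insert j Sstar : Finset (Fin p)) : Set (Fin p)) => X i)) →
        pathDelta X Sstar y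
          = ⨆ j : {j : Fin p // j ∉ Sstar},
              ‖(Submodule.orthogonalProjectionOnto (ℝ ∙ projPerp X Sstar (X j.1)) w :
                  EuclideanSpace ℝ (Fin n))‖ ^ 2) := by
  have hy_w : ∀ S : Finset (Fin p), Sstar ⊆ S → projPerp X S y = projPerp X S w := fun S hS =>
    hy ▸ projPerp_add_of_mem_span X
      (Submodule.sum_smul_mem_span_image X β fun i hi => hS ((hSstar i).mpr hi)) w
  have hdecr : ∀ (S : Finset (Fin p)) (j : Fin p), Sstar ⊆ S →
      ‖projPerp X S y‖ ^ 2 - ‖projPerp X (insert j S) y‖ ^ 2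
        = ‖((ℝ ∙ projPerp X S (X j)).orthogonalProjectionOnto w : EuclideanSpace ℝ (Fin n))‖ ^ 2 :=
    fun S j hS => by
      rw [hy_w S hS, hy_w _ (hS.trans (Finset.subset_insert j S)),
        sq_norm_projPerp_sub_sq_norm_projPerp_insert]
  exact ⟨fun S j hS _ _ => hdecr S j hS,
    fun _ => iSup_congr fun j => hdecr Sstar j.1 subset_rfl⟩
end

section
/- Deterministic lower bound on the maximal loss decrement (equation (eq:leftf1)). Let y = Xβ* + w with X ∈ ℝ^{n×p}, and let Ŝ ⊆ {1,…,p} be such that X_Ŝ has full column rank and X_{Ŝ∪{j}} has full column rank for every j ∉ Ŝ; assume ‖Π⊥[Ŝ] X_j‖₂² ≤ n for all j (which holds when ‖X_j‖₂² = n). Let B = S* \ Ŝ be nonempty with k_s = |B|, and define ℛ = X_Bᵀ Π⊥[Ŝ] X_B β*_B ∈ ℝ^{k_s}. Then Δ(Ŝ) ≥ (1/(k_s n)) ( ‖ℛ‖₂² − 2 |⟨ℛ, X_Bᵀ Π⊥[Ŝ] w⟩| ). -/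
open scoped RealInnerProductSpace

/-!
Adding a column `X j` to `Ŝ` lowers the residual sum of squares by at least the squared length of
`y` along the new residual direction `Π⊥[Ŝ] X j`, i.e. by `⟪X j, Π⊥[Ŝ] y⟫² / ‖Π⊥[Ŝ] X j‖²`, hence
by at least `⟪X j, Π⊥[Ŝ] y⟫² / n`. So `Δ(Ŝ)` dominates the average of these quantities over
`j ∈ B`. Since `Π⊥[Ŝ]` kills the columns in `Ŝ` and `β` vanishes off `S*`, on `B` one has
`⟪X j, Π⊥[Ŝ] y⟫ = ℛ j + ⟪X j, Π⊥[Ŝ] w⟫`; expanding the square and discarding `‖X_Bᵀ Π⊥[Ŝ] w‖²`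
gives the bound.
-/

section Projection

open Submodule

variable {F : Type*} [NormedAddCommGroup F] [InnerProductSpace ℝ F]

theorem Submodule.norm_starProjection_orthogonal_le_norm_sub {K : Submodule ℝ F}
    [K.HasOrthogonalProjection] (y : F) {z : F} (hz : z ∈ K) :
    ‖Kᗮ.starProjection y‖ ≤ ‖y - z‖ := by
  rw [starProjection_orthogonal_val, starProjection_minimal]
  exact ciInf_le ⟨0, by rintro r ⟨x, rfl⟩; positivity⟩ (⟨z, hz⟩ : K)

theorem Submodule.sq_inner_div_norm_sq_le_norm_sq_starProjection_orthogonal_sub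
    {K K' : Submodule ℝ F} [K.HasOrthogonalProjection] [K'.HasOrthogonalProjection]
    (hKK' : K ≤ K') {u : F} (huK' : u ∈ K') (huK : u ∈ Kᗮ) (y : F) :
    ⟪u, y⟫ ^ 2 / ‖u‖ ^ 2 ≤ ‖Kᗮ.starProjection y‖ ^ 2 - ‖K'ᗮ.starProjection y‖ ^ 2 := by
  set a := ⟪u, y⟫ / ‖u‖ ^ 2
  have hz : K.starProjection y + a • u ∈ K' :=
    add_mem (hKK' (K.starProjection_apply_mem y)) (K'.smul_mem a huK')
  have hmin := K'.norm_starProjection_orthogonal_le_norm_sub y hz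
  rw [sub_add_eq_sub_sub, ← starProjection_orthogonal_val] at hmin
  have hinner : ⟪Kᗮ.starProjection y, u⟫ = ⟪u, y⟫ := by
    rw [inner_starProjection_left_eq_right, starProjection_eq_self_iff.2 huK, real_inner_comm]
  have hexpand : ‖Kᗮ.starProjection y - a • u‖ ^ 2
      = ‖Kᗮ.starProjection y‖ ^ 2 - ⟪u, y⟫ ^ 2 / ‖u‖ ^ 2 := by
    rw [norm_sub_sq_real, real_inner_smul_right, hinner, norm_smul, Real.norm_eq_abs, mul_pow,
      sq_abs]
    rcases eq_or_ne ‖u‖ 0 with hu | hu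
    · simp [a, hu]
    · simp only [a]; field_simp; ring
  nlinarith [norm_nonneg (K'ᗮ.starProjection y)]

end Projection

section ProjPerp

open Submodule

variable {n p : ℕ} (X : Fin p → EuclideanSpace ℝ (Fin n)) (S : Finset (Fin p))

theorem projPerp_eq_starProjection (v : EuclideanSpace ℝ (Fin n)) :
    projPerp X S v = (span ℝ (X '' ↑S))ᗮ.starProjection v := by
  rw [starProjection_orthogonal_val, projPerp, coe_orthogonalProjectionOnto_apply]

theorem projPerp_apply_self_of_mem {j : Fin p} (hj : j ∈ S) : projPerp X S (X j) = 0 := by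
  rw [projPerp_eq_starProjection, starProjection_orthogonal_val,
    starProjection_eq_self_iff.2 (subset_span (Set.mem_image_of_mem X hj)), sub_self]

theorem inner_projPerp_right (u v : EuclideanSpace ℝ (Fin n)) :
    ⟪u, projPerp X S v⟫ = ⟪projPerp X S u, v⟫ := by
  rw [projPerp_eq_starProjection, projPerp_eq_starProjection, inner_starProjection_left_eq_right]

theorem sq_inner_div_le_projPerp_sub_projPerp_insert (j : Fin p) (y : EuclideanSpace ℝ (Fin n)) :
    ⟪X j, projPerp X S y⟫ ^ 2 / ‖projPerp X S (X j)‖ ^ 2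
      ≤ ‖projPerp X S y‖ ^ 2 - ‖projPerp X (insert j S) y‖ ^ 2 := by
  have hle : span ℝ (X '' ↑S) ≤ span ℝ (X '' ↑(insert j S)) :=
    span_mono (Set.image_mono (by simp))
  have hXj : X j ∈ span ℝ (X '' ↑(insert j S)) := subset_span ⟨j, by simp, rfl⟩
  have hmem : projPerp X S (X j) ∈ span ℝ (X '' ↑(insert j S)) :=
    sub_mem hXj (hle (starProjection_apply_mem _ _))
  simp only [inner_projPerp_right X S (X j)]
  simp only [projPerp_eq_starProjection] at hmem ⊢
  exact sq_inner_div_norm_sq_le_norm_sq_starProjection_orthogonal_sub hle hmem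
    (starProjection_apply_mem _ _) y

theorem projPerp_sub_projPerp_insert_nonneg (j : Fin p) (y : EuclideanSpace ℝ (Fin n)) :
    0 ≤ ‖projPerp X S y‖ ^ 2 - ‖projPerp X (insert j S) y‖ ^ 2 :=
  (div_nonneg (sq_nonneg _) (sq_nonneg _)).trans
    (sq_inner_div_le_projPerp_sub_projPerp_insert X S j y)

theorem pathDelta_nonneg (y : EuclideanSpace ℝ (Fin n)) : 0 ≤ pathDelta X S y :=
  Real.iSup_nonneg fun j => projPerp_sub_projPerp_insert_nonneg X S j y

theorem projPerp_sub_projPerp_insert_le_pathDelta {j : Fin p} (hj : j ∉ S)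
    (y : EuclideanSpace ℝ (Fin n)) :
    ‖projPerp X S y‖ ^ 2 - ‖projPerp X (insert j S) y‖ ^ 2 ≤ pathDelta X S y := by
  refine le_ciSup (f := fun i : {i // i ∉ S} =>
    ‖projPerp X S y‖ ^ 2 - ‖projPerp X (insert i.1 S) y‖ ^ 2) ⟨‖projPerp X S y‖ ^ 2, ?_⟩ ⟨j, hj⟩
  rintro _ ⟨i, rfl⟩
  simp

theorem sq_inner_div_le_pathDelta {j : Fin p} (hj : j ∉ S) {N : ℝ}
    (hN : ‖projPerp X S (X j)‖ ^ 2 ≤ N) (y : EuclideanSpace ℝ (Fin n)) :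
    ⟪X j, projPerp X S y⟫ ^ 2 / N ≤ pathDelta X S y := by
  rcases eq_or_ne (projPerp X S (X j)) 0 with h0 | h0
  · rw [inner_projPerp_right, h0, inner_zero_left, sq, zero_mul, zero_div]
    exact pathDelta_nonneg X S y
  calc ⟪X j, projPerp X S y⟫ ^ 2 / N
      ≤ ⟪X j, projPerp X S y⟫ ^ 2 / ‖projPerp X S (X j)‖ ^ 2 :=
        div_le_div_of_nonneg_left (sq_nonneg _) (by positivity) hN
    _ ≤ _ := sq_inner_div_le_projPerp_sub_projPerp_insert X S j y
    _ ≤ _ := projPerp_sub_projPerp_insert_le_pathDelta X S hj y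

theorem projPerp_sum_smul_eq_of_support {B : Finset (Fin p)} {β : Fin p → ℝ}
    (hβ : ∀ j ∉ B, β j = 0 ∨ j ∈ S) :
    projPerp X S (∑ j, β j • X j) = projPerp X S (∑ j ∈ B, β j • X j) := by
  simp only [projPerp_eq_starProjection, map_sum, map_smul]
  refine (Finset.sum_subset (Finset.subset_univ B) fun j _ hjB => ?_).symm
  rcases hβ j hjB with h | h
  · rw [h, zero_smul]
  · rw [← projPerp_eq_starProjection, projPerp_apply_self_of_mem X S h, smul_zero]

end ProjPerp

namespace Finset

theorem sum_sq_sub_two_mul_abs_sum_mul_le_sum_add_sq {ι : Type*} (s : Finset ι)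
    (f g : ι → ℝ) :
    ∑ i ∈ s, f i ^ 2 - 2 * |∑ i ∈ s, f i * g i| ≤ ∑ i ∈ s, (f i + g i) ^ 2 := by
  have hexpand : ∑ i ∈ s, (f i + g i) ^ 2
      = ∑ i ∈ s, f i ^ 2 + 2 * ∑ i ∈ s, f i * g i + ∑ i ∈ s, g i ^ 2 := by
    simp only [add_sq, sum_add_distrib, mul_sum, mul_assoc]
  have hg : 0 ≤ ∑ i ∈ s, g i ^ 2 := sum_nonneg fun i _ => sq_nonneg (g i)
  linarith [neg_abs_le (∑ i ∈ s, f i * g i)]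

theorem one_div_card_mul_mul_sum_le {ι : Type*} (s : Finset ι) {f : ι → ℝ} {N M : ℝ}
    (hM : 0 ≤ M) (hf : ∀ i ∈ s, f i / N ≤ M) :
    1 / (#s * N) * ∑ i ∈ s, f i ≤ M := by
  have hsum : ∑ i ∈ s, f i / N ≤ #s * M := by
    simpa using sum_le_card_nsmul s _ M hf
  calc 1 / (#s * N) * ∑ i ∈ s, f i = 1 / #s * ∑ i ∈ s, f i / N := by
        rw [← sum_div]; ring
    _ ≤ 1 / #s * (#s * M) := by gcongr
    _ ≤ M := by
        rcases eq_or_ne (#s : ℝ) 0 with h | h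
        · simpa [h] using hM
        · rw [← mul_assoc, one_div_mul_cancel h, one_mul]

end Finset

theorem delta_lower_bound_general {n p : ℕ}
    (X : Fin p → EuclideanSpace ℝ (Fin n)) (β : Fin p → ℝ)
    (w y : EuclideanSpace ℝ (Fin n)) (hy : y = (∑ j, β j • X j) + w)
    (Sstar : Finset (Fin p)) (hSstar : ∀ j, j ∈ Sstar ↔ β j ≠ 0)
    (Shat : Finset (Fin p))
    (hXnorm : ∀ j, ‖projPerp X Shat (X j)‖ ^ 2 ≤ (n : ℝ))
    (B : Finset (Fin p)) (hB : B = Sstar \ Shat)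
    (R : {i : Fin p // i ∈ B} → ℝ)
    (hR : ∀ i, R i = ⟪X i.1, projPerp X Shat (∑ j ∈ B.attach, β j.1 • X j.1)⟫) :
    pathDelta X Shat y
      ≥ (1 / (B.card * n)) *
          ((∑ i ∈ B.attach, R i ^ 2)
            - 2 * |∑ i ∈ B.attach, R i * ⟪X i.1, projPerp X Shat w⟫|) := by
  have hsupport : ∀ j ∉ B, β j = 0 ∨ j ∈ Shat := by
    intro j hj
    rw [hB, Finset.mem_sdiff, hSstar] at hj
    tauto
  have hsplit : ∀ i : B, ⟪X i.1, projPerp X Shat y⟫ = R i + ⟪X i.1, projPerp X Shat w⟫ := by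
    intro i
    rw [hR, Finset.sum_attach B fun j => β j • X j, ← inner_add_right,
      ← projPerp_sum_smul_eq_of_support X Shat hsupport, projPerp_eq_starProjection,
      projPerp_eq_starProjection, projPerp_eq_starProjection, ← map_add, hy]
  have hnotin : ∀ j ∈ B, j ∉ Shat := by
    intro j hj
    rw [hB] at hj
    exact (Finset.mem_sdiff.1 hj).2
  rw [ge_iff_le, ← Finset.card_attach (s := B)]
  calc _ ≤ 1 / (B.attach.card * n) * ∑ i ∈ B.attach, ⟪X i.1, projPerp X Shat y⟫ ^ 2 := by
        simp only [hsplit]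
        gcongr
        exact Finset.sum_sq_sub_two_mul_abs_sum_mul_le_sum_add_sq _ _ _
    _ ≤ pathDelta X Shat y :=
        Finset.one_div_card_mul_mul_sum_le _ (pathDelta_nonneg X Shat y)
          fun i _ => sq_inner_div_le_pathDelta X Shat (hnotin i i.2) (hXnorm i) y

/-- **Deterministic lower bound on the maximal loss decrement** (equation (eq:leftf1)).
With `y = Xβ* + w`, `B = S* \ Ŝ` nonempty, `k_s = |B|` and
`ℛ = X_Bᵀ Π⊥[Ŝ] X_B β*_B`, one has
`Δ(Ŝ) ≥ (1/(k_s n)) (‖ℛ‖² − 2 |⟨ℛ, X_Bᵀ Π⊥[Ŝ] w⟩|)`. -/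
theorem delta_lower_bound {n p : ℕ}
    (X : Fin p → EuclideanSpace ℝ (Fin n)) (β : Fin p → ℝ)
    (w y : EuclideanSpace ℝ (Fin n)) (hy : y = (∑ j, β j • X j) + w)
    (Sstar : Finset (Fin p)) (hSstar : ∀ j, j ∈ Sstar ↔ β j ≠ 0)
    (Shat : Finset (Fin p))
    (hShat : LinearIndependent ℝ (fun i : (Shat : Set (Fin p)) => X i))
    (hShatj : ∀ j ∉ Shat,
      LinearIndependent ℝ (fun i : ((insert j Shat : Finset (Fin p)) : Set (Fin p)) => X i))
    (hXnorm : ∀ j, ‖projPerp X Shat (X j)‖ ^ 2 ≤ (n : ℝ))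
    (B : Finset (Fin p)) (hB : B = Sstar \ Shat) (hBne : B.Nonempty)
    (R : {i : Fin p // i ∈ B} → ℝ)
    (hR : ∀ i, R i = ⟪X i.1, projPerp X Shat (∑ j ∈ B.attach, β j.1 • X j.1)⟫) :
    pathDelta X Shat y
      ≥ (1 / (B.card * n)) *
          ((∑ i ∈ B.attach, R i ^ 2)
            - 2 * |∑ i ∈ B.attach, R i * ⟪X i.1, projPerp X Shat w⟫|) :=
  delta_lower_bound_general X β w y hy Sstar hSstar Shat hXnorm B hB R hR
end
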